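/- If W̃ is degraded with respect to W, then the plus-transform preserves degradation: W̃^+ is degraded with respect to W^+. -/

import Mathlib

open Finset

/-- A discrete channel: nonnegative transition "probabilities" summing to one. -/
def IsChannel {X Y : Type} [Fintype Y] (W : X → Y → ℝ) : Prop :=
  (∀ x y, 0 ≤ W x y) ∧ ∀ x, ∑ y, W x y = 1

/-- `Wd` is (stochastically) degraded with respect to `W`. -/
def Degraded {X Y Z : Type} [Fintype Y] [Fintype Z]
    (Wd : X → Z → ℝ) (W : X → Y → ℝ) : Prop :=
  ∃ P : Y → Z → ℝ, IsChannel P ∧ ∀ x z, Wd x z = ∑ y, P y z * W x y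
/-- Arıkan's minus transform. -/
noncomputable def Wminus {Y : Type} (W : Fin 2 → Y → ℝ) : Fin 2 → Y × Y → ℝ :=
  fun u1 p => ∑ u2 : Fin 2, (1 / 2 : ℝ) * W (u1 + u2) p.1 * W u2 p.2

/-- Arıkan's plus transform. -/
noncomputable def Wplus {Y : Type} (W : Fin 2 → Y → ℝ) : Fin 2 → Y × Y × Fin 2 → ℝ :=
  fun u2 p => (1 / 2 : ℝ) * W (p.2.2 + u2) p.1 * W u2 p.2.1

/-! If `W̃ = P ∘ W`, then `W̃⁺ = (P ⊗ P ⊗ id) ∘ W⁺`: degrade the two outputs `y₁, y₂` of `W⁺`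
independently by `P` and pass the bit `u₁` through unchanged. -/

namespace Channel

variable {X X₁ X₂ Y Y₁ Y₂ Z : Type}

def comp [Fintype Y] (P : Y → Z → ℝ) (W : X → Y → ℝ) : X → Z → ℝ :=
  fun x z => ∑ y, P y z * W x y

def prod (P : X₁ → Y₁ → ℝ) (Q : X₂ → Y₂ → ℝ) : X₁ × X₂ → Y₁ × Y₂ → ℝ :=
  fun x y => P x.1 y.1 * Q x.2 y.2

def noiseless (X : Type) [DecidableEq X] : X → X → ℝ :=
  fun x y => if x = y then 1 else 0

theorem _root_.Degraded.exists_eq_comp [Fintype Y] [Fintype Z] {Wd : X → Z → ℝ}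
    {W : X → Y → ℝ} (h : Degraded Wd W) : ∃ P, IsChannel P ∧ Wd = comp P W := by
  obtain ⟨P, hP, hWd⟩ := h
  exact ⟨P, hP, funext₂ hWd⟩

theorem _root_.IsChannel.prod [Fintype Y₁] [Fintype Y₂] {P : X₁ → Y₁ → ℝ}
    {Q : X₂ → Y₂ → ℝ} (hP : IsChannel P) (hQ : IsChannel Q) : IsChannel (prod P Q) := by
  refine ⟨fun x y => mul_nonneg (hP.1 _ _) (hQ.1 _ _), fun x => ?_⟩
  simp only [Channel.prod]
  rw [Fintype.sum_prod_type, ← Fintype.sum_mul_sum, hP.2, hQ.2, one_mul]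

theorem isChannel_noiseless [Fintype X] [DecidableEq X] : IsChannel (noiseless X) :=
  ⟨fun _ _ => by simp only [noiseless]; positivity, fun _ => by simp [noiseless]⟩

end Channel

open Channel

theorem Wplus_comp {Y Z : Type} [Fintype Y] (P : Y → Z → ℝ) (W : Fin 2 → Y → ℝ) :
    Wplus (comp P W) = comp (prod P (prod P (noiseless (Fin 2)))) (Wplus W) := by
  ext u ⟨z₁, z₂, v⟩
  have collapse : ∀ y₁ y₂, ∑ u₁, prod P (prod P (noiseless (Fin 2))) (y₁, y₂, u₁) (z₁, z₂, v) *
      Wplus W u (y₁, y₂, u₁) = P y₁ z₁ * P y₂ z₂ * Wplus W u (y₁, y₂, v) := by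
    simp [Channel.prod, noiseless]
  simp only [comp, Fintype.sum_prod_type, collapse]
  calc Wplus (comp P W) u (z₁, z₂, v)
      = 1 / 2 * ((∑ y₁, P y₁ z₁ * W (v + u) y₁) * ∑ y₂, P y₂ z₂ * W u y₂) := by
        simp only [Wplus, comp]; ring
    _ = ∑ y₁, ∑ y₂, P y₁ z₁ * P y₂ z₂ * Wplus W u (y₁, y₂, v) := by
        rw [Finset.sum_mul_sum]
        simp only [Finset.mul_sum, Wplus]
        exact Finset.sum_congr rfl fun _ _ => Finset.sum_congr rfl fun _ _ => by ring

theorem plus_preserves_degradation {Y Z : Type} [Fintype Y] [Fintype Z]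
    (W : Fin 2 → Y → ℝ) (Wd : Fin 2 → Z → ℝ)
    (hdeg : Degraded Wd W) :
    Degraded (Wplus Wd) (Wplus W) := by
  obtain ⟨P, hP, rfl⟩ := hdeg.exists_eq_comp
  exact ⟨_, hP.prod (hP.prod isChannel_noiseless), fun u z => by rw [Wplus_comp]; rfl⟩
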